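/- Let $(x_n)$ be càdlàg functions converging locally uniformly to a continuous $y$ with $y(0) < B$, $T := T_B(y) = \widetilde{T}_B(y) < \infty$. Fix a reset value $r_0 < B$ and define the reset paths $x_n^*(t) = x_n(t)$ for $t < T_B(x_n)$ and $x_n^*(T_B(x_n)) = r_0$, similarly $y^*(t) = y(t)$ for $t < T$ and $y^*(T) = r_0$. Then $T_B(x_n) \to T$ and $x_n^*(T_B(x_n)) \to y^*(T)$, i.e., the post-reset values trivially converge (both equal $r_0$) while the reset times converge. -/

import Mathlib

open Filter Set

/-!
The passage time is upper semicontinuous under pointwise convergence: shortly after `T` the limit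
`y` exceeds `B`, hence so does `xₙ` for large `n`. For lower semicontinuity, `T = T̃_B(y)` and
`y 0 < B` force `y < B` on every `[0, b]` with `b < T`; by compactness `y` keeps a positive gap
below `B` there, which uniform convergence passes on to `xₙ`. The reset values are `r₀` on both
sides.
-/

/-- First passage time of `f` above level `B`. -/
noncomputable def FPT (f : ℝ → ℝ) (B : ℝ) : ℝ := sInf {t : ℝ | 0 < t ∧ B < f t}

/-- Hitting time of `f` at level `B`. -/
noncomputable def HT (f : ℝ → ℝ) (B : ℝ) : ℝ := sInf {t : ℝ | 0 < t ∧ f t = B}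

/-- A real function is càdlàg on `[0,∞)`. -/
def Cadlag (f : ℝ → ℝ) : Prop :=
  (∀ t : ℝ, 0 ≤ t → ContinuousWithinAt f (Set.Ici t) t) ∧
  (∀ t : ℝ, 0 < t → ∃ L : ℝ, Filter.Tendsto f (nhdsWithin t (Set.Iio t)) (nhds L))

theorem FPT_nonneg (f : ℝ → ℝ) (B : ℝ) : 0 ≤ FPT f B :=
  Real.sInf_nonneg fun _ ht => ht.1.le

theorem FPT_le {f : ℝ → ℝ} {B t : ℝ} (ht : 0 < t) (hft : B < f t) : FPT f B ≤ t :=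
  csInf_le ⟨0, fun _ hs => hs.1.le⟩ ⟨ht, hft⟩

theorem le_FPT {f : ℝ → ℝ} {B b : ℝ} (hne : ∃ t, 0 < t ∧ B < f t)
    (hle : ∀ t ∈ Icc 0 b, f t ≤ B) : b ≤ FPT f B := by
  refine le_csInf hne fun t ⟨ht, hft⟩ => ?_
  by_contra! htb
  exact (hle t ⟨ht.le, htb.le⟩).not_gt hft

theorem HT_le {f : ℝ → ℝ} {B t : ℝ} (ht : 0 < t) (hft : f t = B) : HT f B ≤ t :=
  csInf_le ⟨0, fun _ hs => hs.1.le⟩ ⟨ht, hft⟩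

theorem lt_of_lt_FPT {f : ℝ → ℝ} {B t : ℝ} (hfH : FPT f B = HT f B) (ht : 0 < t)
    (htT : t < FPT f B) : f t < B := by
  refine lt_of_le_of_ne ?_ fun hft => ?_
  · by_contra! hft
    exact (FPT_le ht hft).not_gt htT
  · exact (HT_le ht hft).not_gt (hfH ▸ htT)

theorem eventually_lt_FPT {ι : Type*} {l : Filter ι} {F : ι → ℝ → ℝ} {f : ℝ → ℝ} {B a : ℝ}
    (hf : ContinuousOn f (Ici 0)) (hf0 : f 0 < B) (hfH : FPT f B = HT f B)
    (hne : ∀ᶠ i in l, ∃ t, 0 < t ∧ B < F i t)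
    (hF : ∀ s, 0 ≤ s → TendstoUniformlyOn F f l (Icc 0 s)) (ha : a < FPT f B) :
    ∀ᶠ i in l, a < FPT (F i) B := by
  rcases lt_or_ge a 0 with ha0 | ha0
  · exact Eventually.of_forall fun i => ha0.trans_le (FPT_nonneg _ _)
  obtain ⟨b, hab, hbT⟩ := exists_between ha
  have hb : 0 ≤ b := ha0.trans hab.le
  have hlt : ∀ t ∈ Icc 0 b, f t < B := by
    rintro t ⟨ht0, htb⟩
    rcases ht0.eq_or_lt with rfl | ht0
    · exact hf0
    · exact lt_of_lt_FPT hfH ht0 (htb.trans_lt hbT)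
  obtain ⟨t₀, ht₀, hmax⟩ := isCompact_Icc.exists_isMaxOn (nonempty_Icc.2 hb)
    (hf.mono Icc_subset_Ici_self)
  filter_upwards [hne, (hF b hb).eventually_forall_lt (hlt t₀ ht₀)
    fun t ht => hmax ht] with i hi hFi
  exact hab.trans_le (le_FPT hi fun t ht => (hFi t ht).le)

theorem eventually_FPT_lt {ι : Type*} {l : Filter ι} {F : ι → ℝ → ℝ} {f : ℝ → ℝ} {B a : ℝ}
    (hne : ∃ t, 0 < t ∧ B < f t) (hF : ∀ t, 0 < t → Tendsto (fun i => F i t) l (nhds (f t)))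
    (ha : FPT f B < a) : ∀ᶠ i in l, FPT (F i) B < a := by
  obtain ⟨t, ⟨ht, hft⟩, hta⟩ := (csInf_lt_iff ⟨0, fun _ hs => hs.1.le⟩ hne).1 ha
  filter_upwards [(hF t ht).eventually (lt_mem_nhds hft)] with i hi
  exact (FPT_le ht hi).trans_lt hta

theorem tendsto_FPT {ι : Type*} {l : Filter ι} {F : ι → ℝ → ℝ} {f : ℝ → ℝ} {B : ℝ}
    (hf : ContinuousOn f (Ici 0)) (hf0 : f 0 < B) (hne : ∃ t, 0 < t ∧ B < f t)
    (hfH : FPT f B = HT f B) (hF : ∀ s, 0 ≤ s → TendstoUniformlyOn F f l (Icc 0 s)) :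
    Tendsto (fun i => FPT (F i) B) l (nhds (FPT f B)) := by
  have hpt : ∀ t, 0 < t → Tendsto (fun i => F i t) l (nhds (f t)) := fun t ht =>
    (hF t ht.le).tendsto_at ⟨ht.le, le_rfl⟩
  obtain ⟨t, ht, hft⟩ := hne
  have hFne : ∀ᶠ i in l, ∃ t, 0 < t ∧ B < F i t :=
    ((hpt t ht).eventually (lt_mem_nhds hft)).mono fun i hi => ⟨t, ht, hi⟩
  exact tendsto_order.2
    ⟨fun a ha => eventually_lt_FPT hf hf0 hfH hFne hF ha,
     fun a ha => eventually_FPT_lt ⟨t, ht, hft⟩ hpt ha⟩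

theorem reset_window_convergence_general
    (x : ℕ → ℝ → ℝ) (y : ℝ → ℝ) (B r0 : ℝ)
    (hy : ContinuousOn y (Set.Ici 0))
    (hy0 : y 0 < B)
    (hfin : {t : ℝ | 0 < t ∧ B < y t}.Nonempty)
    (hH : FPT y B = HT y B)
    (hconv : ∀ s : ℝ, 0 ≤ s → TendstoUniformlyOn x y atTop (Set.Icc 0 s)) :
    let xstar : ℕ → ℝ → ℝ := fun n t => if t < FPT (x n) B then x n t else r0
    let ystar : ℝ → ℝ := fun t => if t < FPT y B then y t else r0
    Tendsto (fun n => FPT (x n) B) atTop (nhds (FPT y B)) ∧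
    Tendsto (fun n => xstar n (FPT (x n) B)) atTop (nhds (ystar (FPT y B))) := by
  refine ⟨tendsto_FPT hy hy0 hfin hH hconv, ?_⟩
  simp only [lt_irrefl, if_false]
  exact tendsto_const_nhds

/-- single-window reset building block. If càdlàg `xₙ → y`
locally uniformly, `y` is continuous with `y 0 < B`, finite passage time
`T = T_B(y) = 𝑇̃_B(y)`, and the paths are reset to `r₀ < B` at their passage
time, then the reset times converge, `T_B(xₙ) → T`, and the post-reset values
converge, `xₙ*(T_B(xₙ)) → y*(T)` (both being `r₀`). -/
theorem reset_window_convergence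
    (x : ℕ → ℝ → ℝ) (y : ℝ → ℝ) (B r0 : ℝ)
    (hx : ∀ n, Cadlag (x n))
    (hy : ContinuousOn y (Set.Ici 0))
    (hy0 : y 0 < B) (hr0 : r0 < B)
    (hfin : {t : ℝ | 0 < t ∧ B < y t}.Nonempty)
    (hH : FPT y B = HT y B)
    (hconv : ∀ s : ℝ, 0 ≤ s → TendstoUniformlyOn x y atTop (Set.Icc 0 s)) :
    let xstar : ℕ → ℝ → ℝ := fun n t => if t < FPT (x n) B then x n t else r0
    let ystar : ℝ → ℝ := fun t => if t < FPT y B then y t else r0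
    Tendsto (fun n => FPT (x n) B) atTop (nhds (FPT y B)) ∧
    Tendsto (fun n => xstar n (FPT (x n) B)) atTop (nhds (ystar (FPT y B))) :=
  reset_window_convergence_general x y B r0 hy hy0 hfin hH hconv
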